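/- arXiv:1407.4560 — 2 statements merged into one kernel-verified Lean document; each statement's English description precedes it below -/
import Mathlib

section
/- Let G be a holomorphic diffeomorphism germ at the origin of C^2 represented on a neighborhood W of 0 with compact closure, such that every orbit of G in W is periodic (i.e., for every x in W there exists q ≥ 1 with G^q(x) = x). Then G itself is periodic: there exists p ≥ 1 such that G^p = id on W. -/
open Function

/-- If `f` is holomorphic on a ball in `ℂ²` and agrees with the identity near the center,
it agrees with the identity on the whole ball (identity theorem along complex lines). -/
lemma eq_id_on_ball_of_eventuallyEq
    {f : ℂ × ℂ → ℂ × ℂ} {c : ℂ × ℂ} {r : ℝ}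
    (hf : DifferentiableOn ℂ f (Metric.ball c r))
    (hev : ∀ᶠ y in nhds c, f y = y) :
    ∀ z ∈ Metric.ball c r, f z = z := by
  intro z hz
  rcases eq_or_ne z c with rfl | hne
  · exact hev.self_of_nhds
  set d : ℂ × ℂ := z - c with hd
  have hd0 : d ≠ 0 := sub_ne_zero.mpr hne
  have hdn : (0 : ℝ) < ‖d‖ := norm_pos_iff.mpr hd0
  set L : ℂ → ℂ × ℂ := fun t => c + t • d with hL
  set D : Set ℂ := Metric.ball (0 : ℂ) (r / ‖d‖) with hD
  have hmem : ∀ t : ℂ, t ∈ D ↔ L t ∈ Metric.ball c r := by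
    intro t
    simp only [hD, hL, Metric.mem_ball, dist_eq_norm]
    rw [add_sub_cancel_left, norm_smul, sub_zero]
    exact lt_div_iff₀ hdn
  have hDopen : IsOpen D := Metric.isOpen_ball
  have hLdiff : Differentiable ℂ L := (differentiable_id.smul_const d).const_add c
  set φ : ℂ → ℂ × ℂ := fun t => f (L t) - L t with hφ
  have hφdiff : DifferentiableOn ℂ φ D := by
    apply DifferentiableOn.sub
    · exact hf.comp hLdiff.differentiableOn (fun t ht => (hmem t).mp ht)
    · exact hLdiff.differentiableOn
  have hφanal : AnalyticOnNhd ℂ φ D := hφdiff.analyticOnNhd hDopen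
  have hr : 0 < r := Metric.pos_of_mem_ball hz
  have h0D : (0 : ℂ) ∈ D := by
    have hL0 : L 0 = c := by simp [hL]
    rw [hmem, hL0]
    exact Metric.mem_ball_self hr
  have hconn : IsPreconnected D := (convex_ball (0:ℂ) _).isPreconnected
  have hφ0 : φ =ᶠ[nhds 0] 0 := by
    have hLc : Filter.Tendsto L (nhds 0) (nhds c) := by
      have := hLdiff.continuous.tendsto (0 : ℂ)
      simpa [hL] using this
    filter_upwards [hLc.eventually hev] with t ht
    simp [hφ, ht]
  have heq : Set.EqOn φ 0 D :=
    hφanal.eqOn_zero_of_preconnected_of_eventuallyEq_zero hconn h0D hφ0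
  have h1D : (1 : ℂ) ∈ D := by
    rw [hmem]
    simpa [hL, hd] using hz
  have := heq h1D
  simpa [hφ, hL, hd] using sub_eq_zero.mp this

/-- A holomorphic injective self-map of a neighborhood `W` of the origin in `ℂ²`
(with compact closure) all of whose orbits are periodic is itself periodic. -/
theorem periodic_orbits_imp_periodic
    (W : Set (ℂ × ℂ)) (G : ℂ × ℂ → ℂ × ℂ)
    (hW : IsOpen W) (hWc : IsConnected W) (h0 : (0 : ℂ × ℂ) ∈ W)
    (hcpt : IsCompact (closure W))
    (hG : DifferentiableOn ℂ G W) (hinj : Set.InjOn G W)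
    (hmaps : Set.MapsTo G W W) (hG0 : G 0 = 0)
    (hper : ∀ x ∈ W, ∃ q : ℕ, 1 ≤ q ∧ G^[q] x = x) :
    ∃ p : ℕ, 1 ≤ p ∧ ∀ x ∈ W, G^[p] x = x := by
  -- iterates are differentiable on W and map W to W
  have hmapsIter : ∀ q : ℕ, Set.MapsTo (G^[q]) W W := fun q => hmaps.iterate q
  have hiter : ∀ q : ℕ, DifferentiableOn ℂ (G^[q]) W := by
    intro q
    induction q with
    | zero => simpa using differentiableOn_id
    | succ n ih =>
      rw [Function.iterate_succ']
      exact hG.comp ih (hmapsIter n)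
  -- Baire category argument on the subtype W
  haveI : LocallyCompactSpace ↥W := hW.locallyCompactSpace
  haveI : Nonempty ↥W := ⟨⟨0, h0⟩⟩
  set C : ℕ → Set ↥W := fun q => {x | G^[q + 1] (x : ℂ × ℂ) = (x : ℂ × ℂ)} with hC
  have hclosed : ∀ q, IsClosed (C q) := by
    intro q
    have hcont : Continuous fun x : ↥W => G^[q + 1] (x : ℂ × ℂ) :=
      ((hiter (q + 1)).continuousOn).comp_continuous continuous_subtype_val
        (fun x => x.2)
    exact isClosed_eq hcont continuous_subtype_val
  have hunion : (⋃ q, C q) = Set.univ := by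
    ext x
    simp only [Set.mem_iUnion, Set.mem_univ, iff_true]
    obtain ⟨q, hq1, hqx⟩ := hper x x.2
    refine ⟨q - 1, ?_⟩
    have hq : q - 1 + 1 = q := Nat.succ_pred_eq_of_pos hq1
    show G^[q - 1 + 1] (x : ℂ × ℂ) = (x : ℂ × ℂ)
    rw [hq]; exact hqx
  obtain ⟨q, x₀, hx₀⟩ : ∃ q, (interior (C q)).Nonempty :=
    nonempty_interior_of_iUnion_of_closed hclosed hunion
  set p : ℕ := q + 1 with hp
  set f : ℂ × ℂ → ℂ × ℂ := G^[p] with hf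
  have hfd : DifferentiableOn ℂ f W := hiter p
  -- f = id on a neighborhood of some point of W
  have hopenmap : IsOpenMap (Subtype.val : ↥W → ℂ × ℂ) := hW.isOpenMap_subtype_val
  set V : Set (ℂ × ℂ) := Subtype.val '' interior (C q) with hV
  have hVopen : IsOpen V := hopenmap _ isOpen_interior
  have hVsub : V ⊆ W := by rintro _ ⟨y, _, rfl⟩; exact y.2
  have hVeq : ∀ y ∈ V, f y = y := by
    rintro _ ⟨y, hy, rfl⟩
    have hyC : y ∈ C q := interior_subset hy
    exact hyC
  have hz₀ : (x₀ : ℂ × ℂ) ∈ V := ⟨x₀, hx₀, rfl⟩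
  -- spreading via connectedness: the set where f is locally the identity
  set S : Set (ℂ × ℂ) := {x | ∀ᶠ y in nhds x, f y = y} with hS
  have hSopen : IsOpen S := isOpen_setOf_eventually_nhds
  -- key closedness: points of W in the closure of S are in S
  have hkey : ∀ x ∈ W, x ∈ closure S → x ∈ S := by
    intro x hx hxcl
    obtain ⟨r, hr, hball⟩ := Metric.isOpen_iff.mp hW x hx
    obtain ⟨y, hyS, hyd⟩ := Metric.mem_closure_iff.mp hxcl (r / 2) (by linarith)
    rw [dist_comm] at hyd
    have hbally : Metric.ball y (r / 2) ⊆ W := by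
      intro z hz
      apply hball
      have : dist z x ≤ dist z y + dist y x := dist_triangle z y x
      rw [Metric.mem_ball] at hz ⊢
      linarith
    have hid : ∀ z ∈ Metric.ball y (r / 2), f z = z :=
      eq_id_on_ball_of_eventuallyEq (hfd.mono hbally) hyS
    have hxball : x ∈ Metric.ball y (r / 2) := by
      rw [Metric.mem_ball, dist_comm]; exact hyd
    exact Filter.eventually_of_mem (Metric.isOpen_ball.mem_nhds hxball)
      (fun z hz => hid z hz)
  -- connectedness: W ⊆ S
  have hWS : W ⊆ S := by
    by_contra hcon
    obtain ⟨x, hxW, hxS⟩ := Set.not_subset.mp hcon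
    have hsep := hWc.isPreconnected S (closure S)ᶜ hSopen (isClosed_closure.isOpen_compl)
      (fun w hw => by
        by_cases h : w ∈ closure S
        · exact Or.inl (hkey w hw h)
        · exact Or.inr h)
      ⟨(x₀ : ℂ × ℂ), hVsub hz₀, by
        exact Filter.eventually_of_mem (hVopen.mem_nhds hz₀) (fun y hy => hVeq y hy)⟩
      ⟨x, hxW, fun h => hxS (hkey x hxW h)⟩
    obtain ⟨w, _, hw1, hw2⟩ := hsep
    exact hw2 (subset_closure hw1)
  refine ⟨p, Nat.le_add_left 1 q, fun x hx => ?_⟩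
  exact (hWS hx).self_of_nhds
end

section
/- Let h ∈ Diff_1(C,0) be a germ of holomorphic diffeomorphism of (C,0) tangent to the identity and not equal to the identity, say h(z) = z + a z^{k+1} + O(z^{k+2}) with a ≠ 0, k ≥ 1. Then there exists a point z_0 arbitrarily close to 0 whose forward orbit h^n(z_0) converges to 0 and consists of pairwise distinct points; in particular h has infinite orbits in every neighborhood of 0 (Leau–Fatou flower theorem, orbit-attraction part). -/
/-!
Write `h z = z (1 + z^k g z)` with `g 0 = a ≠ 0`. In the approximate Fatou coordinate
`w = -1 / (k a z^k)` the germ becomes `w ↦ w + 1 + o(1)` as `z → 0`, so on a half-plane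
`Re w > R` (which lies in a small punctured disc around `0`) each step raises `Re w` by at least
`1/2`. An orbit started in that half-plane therefore stays in it, has strictly increasing
`Re w`, so consists of distinct points, and `Re w → ∞`, i.e. `z → 0`.
-/

open Function Filter Topology

section Escape

variable {α : Type*} {f : α → α} {W : α → ℝ} {R c : ℝ}

theorem le_apply_iterate_of_step (hc : 0 < c)
    (hstep : ∀ x, R < W x → W x + c ≤ W (f x)) {x : α} (hx : R < W x) (n : ℕ) :
    W x + n * c ≤ W (f^[n] x) := by
  induction n with
  | zero => simp
  | succ n ih =>
    have hR : R < W (f^[n] x) := by nlinarith [(n.cast_nonneg : (0 : ℝ) ≤ n)]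
    rw [iterate_succ_apply']
    push_cast
    linarith [hstep _ hR]

theorem lt_apply_iterate_of_step (hc : 0 < c)
    (hstep : ∀ x, R < W x → W x + c ≤ W (f x)) {x : α} (hx : R < W x) (n : ℕ) :
    R < W (f^[n] x) := by
  nlinarith [le_apply_iterate_of_step hc hstep hx n, (n.cast_nonneg : (0 : ℝ) ≤ n)]

theorem strictMono_apply_iterate_of_step (hc : 0 < c)
    (hstep : ∀ x, R < W x → W x + c ≤ W (f x)) {x : α} (hx : R < W x) :
    StrictMono fun n => W (f^[n] x) :=
  strictMono_nat_of_lt_succ fun n => by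
    rw [iterate_succ_apply']
    linarith [hstep _ (lt_apply_iterate_of_step hc hstep hx n)]

theorem tendsto_apply_iterate_of_step (hc : 0 < c)
    (hstep : ∀ x, R < W x → W x + c ≤ W (f x)) {x : α} (hx : R < W x) :
    Tendsto (fun n => W (f^[n] x)) atTop atTop :=
  tendsto_atTop_mono (le_apply_iterate_of_step hc hstep hx) <|
    tendsto_atTop_add_const_left _ _ <|
      tendsto_natCast_atTop_atTop.atTop_mul_const hc

end Escape

theorem exists_eventually_eq_mul_one_add_pow_mul {𝕜 : Type*} [NontriviallyNormedField 𝕜]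
    [CharZero 𝕜] [CompleteSpace 𝕜] {h : 𝕜 → 𝕜} (hh : AnalyticAt 𝕜 h 0) (h0 : h 0 = 0)
    (hd : deriv h 0 = 1) (hne : ¬ ∀ᶠ z in 𝓝 0, h z = z) :
    ∃ k ≠ 0, ∃ g : 𝕜 → 𝕜, AnalyticAt 𝕜 g 0 ∧ g 0 ≠ 0 ∧
      ∀ᶠ z in 𝓝 0, h z = z * (1 + z ^ k * g z) := by
  set f : 𝕜 → 𝕜 := fun z => h z - z
  have hf : AnalyticAt 𝕜 f 0 := hh.sub analyticAt_id
  have htwo : (2 : ℕ∞) ≤ analyticOrderAt f 0 := by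
    rw [show (2 : ℕ∞) = (2 : ℕ) from rfl, natCast_le_analyticOrderAt_iff_iteratedDeriv_eq_zero hf]
    intro i hi
    interval_cases i
    · simp [f, h0]
    · rw [iteratedDeriv_one, deriv_fun_sub hh.differentiableAt differentiableAt_fun_id, hd,
        deriv_id'', sub_self]
  have hfin : analyticOrderAt f 0 ≠ ⊤ := fun htop =>
    hne <| (analyticOrderAt_eq_top.mp htop).mono fun z hz => sub_eq_zero.mp hz
  obtain ⟨m, hm⟩ := ENat.ne_top_iff_exists.mp hfin
  obtain ⟨g, hg, hg0, hfg⟩ := (hf.analyticOrderAt_eq_natCast (n := m)).mp hm.symm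
  rw [← hm, Nat.ofNat_le_cast] at htwo
  obtain ⟨k, rfl⟩ : ∃ k, m = k + 1 + 1 := Nat.exists_eq_add_of_le' htwo
  refine ⟨k + 1, k.succ_ne_zero, g, hg, hg0, hfg.mono fun z hz => ?_⟩
  have hz' : h z = z + z ^ (k + 1 + 1) * g z := by simpa [f, sub_eq_iff_eq_add'] using hz
  rw [hz']
  ring

noncomputable def fatouCoord (k : ℕ) (a z : ℂ) : ℂ := -(k * a * z ^ k)⁻¹

section FatouCoord

variable {k : ℕ} {a : ℂ}

theorem norm_fatouCoord (z : ℂ) : ‖fatouCoord k a z‖ = (k * ‖a‖ * ‖z‖ ^ k)⁻¹ := by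
  simp [fatouCoord]

theorem ne_zero_of_re_fatouCoord_pos {z : ℂ} (hz : 0 < (fatouCoord k a z).re) : z ≠ 0 := by
  rintro rfl
  rcases eq_or_ne k 0 with rfl | hk <;> simp_all [fatouCoord]

theorem norm_lt_of_lt_re_fatouCoord (hk : k ≠ 0) (ha : a ≠ 0) {ρ : ℝ} (hρ : 0 < ρ) {z : ℂ}
    (hz : (k * ‖a‖ * ρ ^ k)⁻¹ < (fatouCoord k a z).re) : ‖z‖ < ρ := by
  rcases eq_or_ne z 0 with rfl | hz0
  · simpa using hρ
  have hka : 0 < (k : ℝ) * ‖a‖ := by positivity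
  have hlt : (k * ‖a‖ * ρ ^ k)⁻¹ < (k * ‖a‖ * ‖z‖ ^ k)⁻¹ :=
    norm_fatouCoord (a := a) z ▸ hz.trans_le (Complex.re_le_norm _)
  rw [inv_lt_inv₀ (by positivity) (by positivity), mul_lt_mul_iff_right₀ hka] at hlt
  exact (pow_lt_pow_iff_left₀ (norm_nonneg z) hρ.le hk).1 hlt

theorem tendsto_zero_of_tendsto_re_fatouCoord (hk : k ≠ 0) (ha : a ≠ 0) {ι : Type*}
    {l : Filter ι} {u : ι → ℂ} (hu : Tendsto (fun i => (fatouCoord k a (u i)).re) l atTop) :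
    Tendsto u l (𝓝 0) :=
  Metric.tendsto_nhds.2 fun ρ hρ => (hu.eventually_gt_atTop _).mono fun _ hi => by
    simpa using norm_lt_of_lt_re_fatouCoord hk ha hρ hi

theorem exists_fatouCoord_eq (hk : k ≠ 0) (ha : a ≠ 0) {T : ℂ} (hT : T ≠ 0) :
    ∃ z, fatouCoord k a z = T := by
  obtain ⟨z, hz⟩ := IsAlgClosed.exists_pow_nat_eq (-(k * a * T)⁻¹) (Nat.pos_of_ne_zero hk)
  refine ⟨z, ?_⟩
  have hkC : (k : ℂ) ≠ 0 := Nat.cast_ne_zero.2 hk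
  rw [fatouCoord, hz]
  field_simp

theorem fatouCoord_mul_one_add_pow_mul_sub (hk : k ≠ 0) (ha : a ≠ 0) {z w : ℂ} (hz : z ≠ 0)
    (hw : 1 + z ^ k * w ≠ 0) :
    fatouCoord k a (z * (1 + z ^ k * w)) - fatouCoord k a z =
      w * (∑ i ∈ Finset.range k, (1 + z ^ k * w) ^ i) / (k * a * (1 + z ^ k * w) ^ k) := by
  have hkC : (k : ℂ) ≠ 0 := Nat.cast_ne_zero.2 hk
  have hgeom := geom_sum_mul (1 + z ^ k * w) k
  rw [fatouCoord, fatouCoord, mul_pow]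
  field_simp
  linear_combination (-1 : ℂ) * hgeom

theorem tendsto_fatouCoord_mul_one_add_pow_mul_sub (hk : k ≠ 0) {g : ℂ → ℂ}
    (hg : ContinuousAt g 0) (hg0 : g 0 ≠ 0) :
    Tendsto (fun z => fatouCoord k (g 0) (z * (1 + z ^ k * g z)) - fatouCoord k (g 0) z)
      (𝓝[≠] 0) (𝓝 1) := by
  set u : ℂ → ℂ := fun z => 1 + z ^ k * g z
  have hu : ContinuousAt u 0 := by fun_prop
  have hu0 : u 0 = 1 := by simp [u, hk]
  set Φ : ℂ → ℂ := fun z => g z * (∑ i ∈ Finset.range k, u z ^ i) / (k * g 0 * u z ^ k)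
  have hkC : (k : ℂ) ≠ 0 := Nat.cast_ne_zero.2 hk
  have hΦ : ContinuousAt Φ 0 :=
    (hg.mul (by fun_prop)).div (by fun_prop) (by simp [hu0, hkC, hg0])
  have hΦ0 : Φ 0 = 1 := by
    simp only [Φ, hu0, one_pow, Finset.sum_const, Finset.card_range, nsmul_eq_mul, mul_one]
    field_simp
  have hdiff : ∀ᶠ z in 𝓝[≠] 0, Φ z =
      fatouCoord k (g 0) (z * (1 + z ^ k * g z)) - fatouCoord k (g 0) z := by
    filter_upwards [self_mem_nhdsWithin,
      nhdsWithin_le_nhds (hu.eventually_ne (hu0 ▸ one_ne_zero))] with z hz huz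
    exact (fatouCoord_mul_one_add_pow_mul_sub hk hg0 hz huz).symm
  exact (hΦ0 ▸ hΦ.tendsto.mono_left nhdsWithin_le_nhds).congr' hdiff

theorem eventually_re_fatouCoord_add_half_le (hk : k ≠ 0) {g h : ℂ → ℂ}
    (hg : ContinuousAt g 0) (hg0 : g 0 ≠ 0) (hnf : ∀ᶠ z in 𝓝 0, h z = z * (1 + z ^ k * g z)) :
    ∀ᶠ z in 𝓝[≠] 0, (fatouCoord k (g 0) z).re + 1 / 2 ≤ (fatouCoord k (g 0) (h z)).re := by
  have hre : ∀ᶠ w : ℂ in 𝓝 1, 1 / 2 < w.re :=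
    continuousAt_const.eventually_lt Complex.continuous_re.continuousAt (by norm_num)
  filter_upwards [nhdsWithin_le_nhds hnf,
    (tendsto_fatouCoord_mul_one_add_pow_mul_sub hk hg hg0).eventually hre] with z hz hlt
  rw [hz]
  linarith [Complex.sub_re (fatouCoord k (g 0) (z * (1 + z ^ k * g z))) (fatouCoord k (g 0) z)]

end FatouCoord

/-- Leau–Fatou, orbit-attraction part: A non-identity germ `h` of
biholomorphism of `(ℂ,0)` tangent to the identity has, arbitrarily close to `0`, a point
`z₀ ≠ 0` whose forward orbit stays near `0`, converges to `0`, and consists of pairwise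
distinct points; in particular `h` has infinite orbits in every neighborhood of `0`. -/
theorem leau_fatou_attracting_orbit
    (h : ℂ → ℂ) (hh : AnalyticAt ℂ h 0) (h0 : h 0 = 0)
    (hd : deriv h 0 = 1) (hne : ¬ ∀ᶠ z in nhds (0 : ℂ), h z = z) :
    ∀ ε > (0 : ℝ), ∃ z0 : ℂ, z0 ≠ 0 ∧ ‖z0‖ < ε ∧
      (∀ n : ℕ, ‖h^[n] z0‖ < ε) ∧
      Tendsto (fun n : ℕ => h^[n] z0) atTop (nhds 0) ∧
      Function.Injective (fun n : ℕ => h^[n] z0) := by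
  intro ε hε
  obtain ⟨k, hk, g, hg, hg0, hnf⟩ := exists_eventually_eq_mul_one_add_pow_mul hh h0 hd hne
  set F := fatouCoord k (g 0)
  obtain ⟨δ, hδ, hδstep⟩ := Metric.eventually_nhds_iff.1 <| eventually_nhdsWithin_iff.1 <|
    eventually_re_fatouCoord_add_half_le hk hg.continuousAt hg0 hnf
  set ρ := min δ ε
  set R := (k * ‖g 0‖ * ρ ^ k)⁻¹
  have hR : 0 < R := by positivity
  have hsmall : ∀ z, R < (F z).re → z ≠ 0 ∧ ‖z‖ < ρ := fun z hz =>
    ⟨ne_zero_of_re_fatouCoord_pos (hR.trans hz),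
      norm_lt_of_lt_re_fatouCoord hk hg0 (lt_min hδ hε) hz⟩
  have hstep : ∀ z, R < (F z).re → (F z).re + 1 / 2 ≤ (F (h z)).re := fun z hz =>
    hδstep (by simpa using (hsmall z hz).2.trans_le (min_le_left δ ε)) (hsmall z hz).1
  obtain ⟨z0, hz0⟩ := exists_fatouCoord_eq hk hg0 (T := (R + 1 : ℝ))
    (by exact_mod_cast (by positivity : R + 1 ≠ 0))
  have hRz0 : R < (F z0).re := by simp [F, hz0]
  have horbit n : R < (F (h^[n] z0)).re := lt_apply_iterate_of_step one_half_pos hstep hRz0 n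
  refine ⟨z0, (hsmall z0 hRz0).1, (hsmall z0 hRz0).2.trans_le (min_le_right δ ε),
    fun n => (hsmall _ (horbit n)).2.trans_le (min_le_right δ ε),
    tendsto_zero_of_tendsto_re_fatouCoord hk hg0
      (tendsto_apply_iterate_of_step one_half_pos hstep hRz0),
    (strictMono_apply_iterate_of_step one_half_pos hstep hRz0).injective.of_comp
      (f := fun z => (F z).re)⟩
end
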